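/- With notation as in the lifted-axis construction (p, x in the unit ball, ε ∈ (0,1/8], x↑ the shrink-lift of x, ē_i the lifted axis, and β(ε) = (1-√(1-ε²))/√(1-ε²)), the angle θ_i = arcsin(|ē_iᵀ·x↑|) satisfies max(0, ε(1-ε)·(|x_i - p_i| - β(ε))) ≤ θ_i ≤ ε(1+ε)·(|x_i - p_i| + β(ε)). -/

import Mathlib

/-!
Expanding the inner product gives `|ēᵢ · x↑| = ε |xᵢ A - pᵢ B| / z` with `A = √(1 - ε²‖p‖²)`,
`B = √(1 - ε²‖x‖²)` and `z = √(ε²pᵢ² + A²)`, all three in `[s, 1]` where `s = √(1 - ε²)`.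
Since `|A - B| ≤ 1 - s = s β(ε)`, the numerator is `A |xᵢ - pᵢ|` up to an error `1 - s`.
The lower bound then follows from `arcsin y ≥ y`; for the upper bound, `sin t ≥ t - t³/6`
and the loss `1/s = 1 + β(ε)` are absorbed by the factor `1 + ε`.
-/

open scoped RealInnerProductSpace

noncomputable def shrinkLift (d : ℕ) (ε : ℝ) (x : EuclideanSpace ℝ (Fin d)) :
    EuclideanSpace ℝ (Fin (d + 1)) :=
  WithLp.toLp 2 (fun i => if h : (i : ℕ) < d then ε * x ⟨i, h⟩ else Real.sqrt (1 - ε ^ 2 * ‖x‖ ^ 2))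

noncomputable def liftedAxis (d : ℕ) (ε : ℝ) (p : EuclideanSpace ℝ (Fin d)) (i : Fin d) :
    EuclideanSpace ℝ (Fin (d + 1)) :=
  let sgn : ℝ := if 0 ≤ p i then 1 else -1
  let z : ℝ := Real.sqrt (ε ^ 2 * (p i) ^ 2 + 1 - ε ^ 2 * ‖p‖ ^ 2)
  let a : ℝ := -sgn * Real.sqrt (1 - ε ^ 2 * ‖p‖ ^ 2) / z
  WithLp.toLp 2 (fun j => if h : (j : ℕ) < d then (if (⟨j, h⟩ : Fin d) = i then a else 0)
           else Real.sqrt (1 - a ^ 2))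

noncomputable def betaErr (ε : ℝ) : ℝ :=
  (1 - Real.sqrt (1 - ε ^ 2)) / Real.sqrt (1 - ε ^ 2)

open Real

theorem inner_liftedAxis_shrinkLift (d : ℕ) (ε : ℝ) (p x : EuclideanSpace ℝ (Fin d)) (i : Fin d) :
    ⟪liftedAxis d ε p i, shrinkLift d ε x⟫ =
      let a := -(if 0 ≤ p i then 1 else -1) * √(1 - ε ^ 2 * ‖p‖ ^ 2) /
        √(ε ^ 2 * p i ^ 2 + 1 - ε ^ 2 * ‖p‖ ^ 2)
      a * (ε * x i) + √(1 - a ^ 2) * √(1 - ε ^ 2 * ‖x‖ ^ 2) := by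
  rw [PiLp.inner_apply, Fin.sum_univ_castSucc]
  simp [liftedAxis, shrinkLift, mul_comm]

theorem abs_inner_liftedAxis_shrinkLift {d : ℕ} {ε : ℝ} {p : EuclideanSpace ℝ (Fin d)}
    (x : EuclideanSpace ℝ (Fin d)) (i : Fin d) (hε : 0 ≤ ε) (hp : ε * ‖p‖ < 1) :
    |⟪liftedAxis d ε p i, shrinkLift d ε x⟫| =
      ε * |x i * √(1 - ε ^ 2 * ‖p‖ ^ 2) - p i * √(1 - ε ^ 2 * ‖x‖ ^ 2)| /
        √(ε ^ 2 * p i ^ 2 + 1 - ε ^ 2 * ‖p‖ ^ 2) := by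
  rw [inner_liftedAxis_shrinkLift]
  set A := √(1 - ε ^ 2 * ‖p‖ ^ 2)
  set B := √(1 - ε ^ 2 * ‖x‖ ^ 2)
  set z := √(ε ^ 2 * p i ^ 2 + 1 - ε ^ 2 * ‖p‖ ^ 2)
  have hεp : 0 < 1 - ε ^ 2 * ‖p‖ ^ 2 := by nlinarith [mul_nonneg hε (norm_nonneg p)]
  have hz2 : 0 < ε ^ 2 * p i ^ 2 + 1 - ε ^ 2 * ‖p‖ ^ 2 := by nlinarith [sq_nonneg (ε * p i)]
  have hz0 : 0 < z := sqrt_pos.2 hz2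
  have hz : z ^ 2 = ε ^ 2 * p i ^ 2 + A ^ 2 := by
    rw [sq_sqrt hz2.le, sq_sqrt hεp.le]
    ring
  have hlast (σ : ℝ) (hσ : σ ^ 2 = 1) : √(1 - (-σ * A / z) ^ 2) = ε * |p i| / z := by
    rw [← sqrt_sq (by positivity : 0 ≤ ε * |p i| / z)]
    congr 1
    field_simp
    rw [hσ, sq_abs, hz]
    ring
  have habs : |ε * (x i * A - p i * B) / z| = ε * |x i * A - p i * B| / z := by
    rw [abs_div, abs_mul, abs_of_nonneg hε, abs_of_pos hz0]
  split_ifs with hpi <;> dsimp only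
  · rw [hlast 1 (by norm_num), abs_of_nonneg hpi, ← habs, ← abs_neg]
    congr 1
    ring
  · rw [hlast (-1) (by norm_num), abs_of_neg (not_le.1 hpi), ← habs]
    congr 1
    ring

section Estimates

variable {ε : ℝ}

theorem sqrt_one_sub_mul_mem_Icc {t : ℝ} (ht0 : 0 ≤ t) (ht1 : t ≤ 1) :
    √(1 - ε ^ 2 * t) ∈ Set.Icc (√(1 - ε ^ 2)) 1 :=
  ⟨sqrt_le_sqrt (by nlinarith [sq_nonneg ε]), sqrt_le_one.2 (by nlinarith [sq_nonneg ε])⟩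

theorem one_sub_le_sqrt_one_sub_sq (h0 : 0 ≤ ε) (h1 : ε ≤ 1) : 1 - ε ≤ √(1 - ε ^ 2) :=
  (le_sqrt (by linarith) (by nlinarith)).2 (by nlinarith)

theorem betaErr_pos (h0 : 0 < ε) (h1 : ε < 1) : 0 < betaErr ε := by
  have hs : √(1 - ε ^ 2) < 1 := by rw [sqrt_lt' one_pos]; nlinarith
  exact div_pos (by linarith) (sqrt_pos.2 (by nlinarith))

theorem betaErr_le (h0 : 0 ≤ ε) (h1 : ε ≤ 1 / 8) : betaErr ε ≤ ε / 7 := by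
  have hs := one_sub_le_sqrt_one_sub_sq h0 (by linarith)
  have hs2 : √(1 - ε ^ 2) ^ 2 = 1 - ε ^ 2 := sq_sqrt (by nlinarith)
  have hs1 : √(1 - ε ^ 2) ≤ 1 := sqrt_le_one.2 (by nlinarith)
  rw [betaErr, div_le_iff₀ (by linarith)]
  -- `1 - s ≤ ε²` because `s ≥ s² = 1 - ε²`
  nlinarith

theorem abs_abs_mul_sub_mul_sub_le {u v A B : ℝ} (hA : 0 ≤ A) :
    |(|u * A - v * B| - A * |u - v|)| ≤ |v| * |A - B| := by
  calc |(|u * A - v * B| - A * |u - v|)| = |(|u * A - v * B| - |A * (u - v)|)| := by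
        rw [abs_mul, abs_of_nonneg hA]
    _ ≤ |u * A - v * B - A * (u - v)| := abs_abs_sub_abs_le_abs_sub _ _
    _ = |v| * |A - B| := by rw [← abs_mul]; ring_nf

variable {s A z T D : ℝ}

theorem div_le_of_abs_sub_mul_le (hε : 0 ≤ ε) (hD : 0 ≤ D) (hT0 : 0 ≤ T) (hA1 : A ≤ 1)
    (hs : 0 < s) (hsz : s ≤ z) (hT : |T - A * D| ≤ 1 - s) :
    ε * T / z ≤ ε * ((1 + (1 - s) / s) * D + (1 - s) / s) := by
  have hTD : T ≤ D + (1 - s) := by nlinarith [le_abs_self (T - A * D)]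
  calc ε * T / z ≤ ε * T / s := div_le_div_of_nonneg_left (by positivity) hs hsz
    _ ≤ ε * (D + (1 - s)) / s := by gcongr
    _ = ε * ((1 + (1 - s) / s) * D + (1 - s) / s) := by field_simp; ring

theorem le_div_of_abs_sub_mul_le (hε : 0 ≤ ε) (hD : 0 ≤ D) (hT0 : 0 ≤ T) (hsA : s ≤ A)
    (hs : 0 < s) (hz0 : 0 < z) (hz1 : z ≤ 1) (hT : |T - A * D| ≤ 1 - s) :
    ε * s * (D - (1 - s) / s) ≤ ε * T / z := by
  have hTD : s * D - (1 - s) ≤ T := by nlinarith [neg_abs_le (T - A * D)]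
  calc ε * s * (D - (1 - s) / s) = ε * (s * D - (1 - s)) := by field_simp
    _ ≤ ε * T := by gcongr
    _ ≤ ε * T / z := le_div_self (by positivity) hz0 hz1

end Estimates

theorem mul_add_le_sub_cube {ε D β : ℝ} (hε0 : 0 ≤ ε) (hε : ε ≤ 1 / 8) (hD0 : 0 ≤ D) (hD : D ≤ 2)
    (hβ0 : 0 ≤ β) (hβ : β ≤ ε / 7) :
    ε * ((1 + β) * D + β) ≤ ε * (1 + ε) * (D + β) - (ε * (1 + ε) * (D + β)) ^ 3 / 6 := by
  set R := ε * (1 + ε) * (D + β)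
  -- the slack `R - ε((1 + β)D + β)` is of order `ε²(D + β)`, the cubic term of order `ε³(D + β)`
  have hR0 : 0 ≤ R := by positivity
  have hR : R ≤ 3 * ε := by nlinarith [mul_nonneg hε0 hD0, mul_nonneg hε0 hβ0]
  have hR2 : R ^ 2 ≤ 9 * ε ^ 2 := by nlinarith
  have hcube : R ^ 3 / 6 ≤ 3 / 2 * ε ^ 2 * R := by nlinarith
  have hslack : 3 / 2 * ε ^ 2 * R ≤ ε * ((ε - β) * D + ε * β) := by
    have hR' : R ≤ 9 / 8 * ε * (D + β) := by nlinarith [mul_nonneg hε0 (add_nonneg hD0 hβ0)]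
    have hεβ : 6 / 7 * ε * D ≤ (ε - β) * D := by nlinarith
    calc 3 / 2 * ε ^ 2 * R ≤ 3 / 2 * ε ^ 2 * (9 / 8 * ε * (D + β)) := by gcongr
      _ ≤ ε * (6 / 7 * ε * D + ε * β) := by
        nlinarith [mul_nonneg (sq_nonneg ε) (add_nonneg hD0 hβ0)]
      _ ≤ ε * ((ε - β) * D + ε * β) := by gcongr
  linarith [show R - ε * ((1 + β) * D + β) = ε * ((ε - β) * D + ε * β) by ring]

theorem self_le_arcsin {x : ℝ} (h0 : 0 ≤ x) (h1 : x ≤ 1) : x ≤ arcsin x :=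
  (le_arcsin_iff_sin_le ⟨by linarith [pi_pos], by linarith [pi_gt_three]⟩ ⟨by linarith, h1⟩).2
    (sin_le h0)

theorem arcsin_le_of_le_sub_cube {x y : ℝ} (h0 : 0 ≤ y) (h1 : y < π / 2)
    (hxy : x ≤ y - y ^ 3 / 6) : arcsin x ≤ y :=
  (arcsin_le_iff_le_sin' ⟨by linarith [pi_pos], h1⟩).2 (hxy.trans (sin_ge_sub_cube h0))

theorem arcsin_div_bounds {ε u v A B z : ℝ} (hε0 : 0 < ε) (hε : ε ≤ 1 / 8) (hu : |u| ≤ 1)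
    (hv : |v| ≤ 1) (hA : A ∈ Set.Icc (√(1 - ε ^ 2)) 1) (hB : B ∈ Set.Icc (√(1 - ε ^ 2)) 1)
    (hz : z ∈ Set.Icc (√(1 - ε ^ 2)) 1) :
    max 0 (ε * (1 - ε) * (|u - v| - betaErr ε)) ≤ arcsin (ε * |u * A - v * B| / z) ∧
      arcsin (ε * |u * A - v * B| / z) ≤ ε * (1 + ε) * (|u - v| + betaErr ε) := by
  set s := √(1 - ε ^ 2)
  have hs : 0 < s := sqrt_pos.2 (by nlinarith)
  have hT : |(|u * A - v * B| - A * |u - v|)| ≤ 1 - s :=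
    calc _ ≤ |v| * |A - B| := abs_abs_mul_sub_mul_sub_le (hs.le.trans hA.1)
      _ ≤ 1 * (1 - s) := by
        gcongr
        exact abs_sub_le_iff.2 ⟨by linarith [hA.2, hB.1], by linarith [hA.1, hB.2]⟩
      _ = 1 - s := one_mul _
  have hupper := div_le_of_abs_sub_mul_le hε0.le (abs_nonneg _) (abs_nonneg _) hA.2 hs hz.1 hT
  have hlower := le_div_of_abs_sub_mul_le hε0.le (abs_nonneg _) (abs_nonneg _) hA.1 hs
    (hs.trans_le hz.1) hz.2 hT
  have hD : |u - v| ≤ 2 := (abs_sub _ _).trans (by linarith)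
  have hβ0 := betaErr_pos hε0 (by linarith)
  have hcube := mul_add_le_sub_cube hε0.le hε (abs_nonneg _) hD hβ0.le (betaErr_le hε0.le hε)
  set m := ε * |u * A - v * B| / z
  set R := ε * (1 + ε) * (|u - v| + betaErr ε)
  have hR0 : 0 ≤ R := by positivity
  have hm0 : 0 ≤ m := div_nonneg (by positivity) (hs.le.trans hz.1)
  have hmR : m ≤ R - R ^ 3 / 6 := hupper.trans hcube
  have hR1 : R ≤ 1 := by
    have hq : (1 + ε) * (|u - v| + betaErr ε) ≤ 3 := by nlinarith [betaErr_le hε0.le hε]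
    nlinarith [mul_le_mul_of_nonneg_left hq hε0.le]
  refine ⟨max_le (arcsin_nonneg.2 hm0) ?_,
    arcsin_le_of_le_sub_cube hR0 (by linarith [pi_gt_three]) hmR⟩
  rcases le_total |u - v| (betaErr ε) with hDβ | hβD
  · exact (mul_nonpos_of_nonneg_of_nonpos (by nlinarith) (by linarith)).trans
      (arcsin_nonneg.2 hm0)
  · calc ε * (1 - ε) * (|u - v| - betaErr ε) ≤ ε * s * (|u - v| - betaErr ε) := by
          gcongr
          exact one_sub_le_sqrt_one_sub_sq hε0.le (by linarith)
      _ ≤ m := hlower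
      _ ≤ arcsin m := self_le_arcsin hm0 (by nlinarith [pow_nonneg hR0 3])

theorem stmt_16 (d : ℕ) (p x : EuclideanSpace ℝ (Fin d)) (hp : ‖p‖ ≤ 1) (hx : ‖x‖ ≤ 1)
    (ε : ℝ) (hε0 : 0 < ε) (hε : ε ≤ 1 / 8) (i : Fin d) :
    max 0 (ε * (1 - ε) * (|x i - p i| - betaErr ε)) ≤
      Real.arcsin |⟪liftedAxis d ε p i, shrinkLift d ε x⟫| ∧
    Real.arcsin |⟪liftedAxis d ε p i, shrinkLift d ε x⟫| ≤
      ε * (1 + ε) * (|x i - p i| + betaErr ε) := by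
  have hpi : |p i| ≤ 1 := (PiLp.norm_apply_le p i).trans hp
  have hxi : |x i| ≤ 1 := (PiLp.norm_apply_le x i).trans hx
  rw [abs_inner_liftedAxis_shrinkLift x i hε0.le (by nlinarith [norm_nonneg p])]
  refine arcsin_div_bounds hε0 hε hxi hpi
    (sqrt_one_sub_mul_mem_Icc (by positivity) (by nlinarith [norm_nonneg p]))
    (sqrt_one_sub_mul_mem_Icc (by positivity) (by nlinarith [norm_nonneg x])) ?_
  rw [show ε ^ 2 * p i ^ 2 + 1 - ε ^ 2 * ‖p‖ ^ 2 = 1 - ε ^ 2 * (‖p‖ ^ 2 - p i ^ 2) by ring]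
  have hpi2 : p i ^ 2 ≤ ‖p‖ ^ 2 := sq_le_sq.2 ((PiLp.norm_apply_le p i).trans (le_abs_self _))
  exact sqrt_one_sub_mul_mem_Icc (by linarith) (by nlinarith [norm_nonneg p, sq_nonneg (p i)])
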